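/- Let $k$ be an algebraically closed field of characteristic zero, let $s \geq 1$, $t \geq 1$ and $u \geq 0$ be integers, and let $c_1, c_2 \in k \setminus \{0\}$. Then the $k$-derivation $\bar{d} = \partial_x + x^u(c_1 x^t + c_2 y^s)\partial_y$ of $k[x,y]$ is simple if and only if the $k$-derivation $d = \partial_x + x^u(x^t + y^s)\partial_y$ of $k[x,y]$ is simple. -/

import Mathlib

/-!
The scaling automorphism `x ↦ α x, y ↦ β y` of `k[x,y]` conjugates `d̄` into `α • d` as soon as
`c₁ β = α ^ (u + t + 1)` and `c₂ β = α ^ (u + 1) β ^ s`; eliminating `β` leaves a single equation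
`α ^ m = c₂ c₁ ^ (s - 1)` with `m ≥ 1`, which is solvable because `k` is algebraically closed.
Simplicity is invariant under conjugation by automorphisms and under multiplication by units.
-/

open MvPolynomial

/-- A `k`-derivation `d` of `k[x,y]` is *simple* if the only `d`-differential ideals
(ideals `I` with `d(I) ⊆ I`) are `(0)` and the whole ring. Here `k[x,y]` is modelled as
`MvPolynomial (Fin 2) k`, with `x = X 0` and `y = X 1`. -/
def IsSimpleDerivation {k : Type*} [CommRing k]
    (d : Derivation k (MvPolynomial (Fin 2) k) (MvPolynomial (Fin 2) k)) : Prop :=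
  ∀ I : Ideal (MvPolynomial (Fin 2) k), (∀ f ∈ I, d f ∈ I) → I = ⊥ ∨ I = ⊤

namespace Derivation

variable {R A : Type*} [CommRing R] [CommRing A] [Algebra R A]

def conj (σ : A ≃ₐ[R] A) (d : Derivation R A A) : Derivation R A A where
  toLinearMap := σ.symm.toLinearMap ∘ₗ d.toLinearMap ∘ₗ σ.toLinearMap
  map_one_eq_zero' := by simp
  leibniz' a b := by simp

@[simp]
lemma conj_apply (σ : A ≃ₐ[R] A) (d : Derivation R A A) (a : A) :
    d.conj σ a = σ.symm (d (σ a)) := rfl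

@[simp]
lemma conj_symm_conj (σ : A ≃ₐ[R] A) (d : Derivation R A A) : (d.conj σ).conj σ.symm = d := by
  ext a
  simp

end Derivation

namespace MvPolynomial

variable {R ι : Type*} [CommSemiring R]

noncomputable def scaleVars (a : ι → Rˣ) : MvPolynomial ι R ≃ₐ[R] MvPolynomial ι R :=
  AlgEquiv.ofAlgHom (aeval fun i => C (a i : R) * X i) (aeval fun i => C (↑(a i)⁻¹ : R) * X i)
    (algHom_ext fun i => by simp [← mul_assoc, ← C_mul])
    (algHom_ext fun i => by simp [← mul_assoc, ← C_mul])

@[simp]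
lemma scaleVars_X (a : ι → Rˣ) (i : ι) : scaleVars a (X i) = C (a i : R) * X i := by
  simp [scaleVars]

@[simp]
lemma scaleVars_C (a : ι → Rˣ) (r : R) : scaleVars a (C r) = C r :=
  (scaleVars a).commutes r

end MvPolynomial

section Simplicity

variable {k : Type*} [CommRing k]

theorem IsSimpleDerivation.conj
    {d : Derivation k (MvPolynomial (Fin 2) k) (MvPolynomial (Fin 2) k)} (hd : IsSimpleDerivation d)
    (σ : MvPolynomial (Fin 2) k ≃ₐ[k] MvPolynomial (Fin 2) k) :
    IsSimpleDerivation (d.conj σ) := by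
  intro I hI
  have hJ : ∀ g ∈ I.comap σ.symm, d g ∈ I.comap σ.symm := fun g hg => by
    simpa using hI _ hg
  have hIJ : I = (I.comap σ.symm).comap σ := by ext; simp
  rcases hd _ hJ with hbot | htop
  · rw [hIJ, hbot]
    exact .inl (Ideal.comap_bot_of_injective _ σ.injective)
  · rw [hIJ, htop]
    exact .inr Ideal.comap_top

theorem isSimpleDerivation_conj_iff
    (σ : MvPolynomial (Fin 2) k ≃ₐ[k] MvPolynomial (Fin 2) k)
    (d : Derivation k (MvPolynomial (Fin 2) k) (MvPolynomial (Fin 2) k)) :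
    IsSimpleDerivation (d.conj σ) ↔ IsSimpleDerivation d :=
  ⟨fun h => d.conj_symm_conj σ ▸ h.conj σ.symm, fun h => h.conj σ⟩

theorem isSimpleDerivation_smul_iff {α : k} (hα : IsUnit α)
    (d : Derivation k (MvPolynomial (Fin 2) k) (MvPolynomial (Fin 2) k)) :
    IsSimpleDerivation (α • d) ↔ IsSimpleDerivation d := by
  have hmem (I : Ideal (MvPolynomial (Fin 2) k)) (f) : (α • d) f ∈ I ↔ d f ∈ I := by
    rw [Derivation.smul_apply, smul_eq_C_mul]
    exact Submodule.smul_mem_iff_of_isUnit I (hα.map C)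
  simp only [IsSimpleDerivation, hmem]

end Simplicity

theorem conj_scaleVars_mkDerivation {k : Type*} [CommRing k] {s t u : ℕ} {c₁ c₂ : k} {α β : kˣ}
    (h₁ : c₁ * β = α ^ (u + t + 1)) (h₂ : c₂ * β = α ^ (u + 1) * β ^ s) :
    (mkDerivation k ![1, X 0 ^ u * (C c₁ * X 0 ^ t + C c₂ * X 1 ^ s)]).conj (scaleVars ![α, β]) =
      (α : k) • mkDerivation k ![1, X 0 ^ u * (X 0 ^ t + X 1 ^ s)] := by
  refine derivation_ext fun i => ?_
  rw [Derivation.conj_apply, AlgEquiv.symm_apply_eq]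
  fin_cases i
  · simp [smul_eq_C_mul]
  · have hC₁ : (C c₁ * C (β : k) : MvPolynomial (Fin 2) k) = C (α : k) ^ (u + t + 1) := by
      rw [← C_mul, h₁, C_pow]
    have hC₂ :
        (C c₂ * C (β : k) : MvPolynomial (Fin 2) k) = C (α : k) ^ (u + 1) * C (β : k) ^ s := by
      rw [← C_mul, h₂, C_mul, C_pow, C_pow]
    simp only [Fin.mk_one, scaleVars_X, Matrix.cons_val_one, Matrix.cons_val_fin_one,
      Derivation.leibniz, mkDerivation_X, smul_eq_mul, derivation_C, mul_zero, add_zero,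
      Derivation.coe_smul, Pi.smul_apply, smul_eq_C_mul, map_mul, scaleVars_C, map_pow,
      Matrix.cons_val_zero, map_add]
    linear_combination X 0 ^ (u + t) * hC₁ + X 0 ^ u * X 1 ^ s * hC₂

theorem exists_units_mul_eq_pow_of_isAlgClosed {k : Type*} [Field k] [IsAlgClosed k]
    {s : ℕ} (hs : 1 ≤ s) (t u : ℕ) {c₁ c₂ : k} (hc₁ : c₁ ≠ 0) (hc₂ : c₂ ≠ 0) :
    ∃ α β : kˣ, c₁ * β = α ^ (u + t + 1) ∧ c₂ * β = α ^ (u + 1) * β ^ s := by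
  obtain ⟨n, rfl⟩ : ∃ n, s = n + 1 := ⟨s - 1, by omega⟩
  obtain ⟨α, hα⟩ := IsAlgClosed.exists_pow_nat_eq (c₂ * c₁ ^ n)
    (by positivity : 0 < u + 1 + n * (u + t + 1))
  have hα₀ : α ≠ 0 := by
    rintro rfl
    exact mul_ne_zero hc₂ (pow_ne_zero n hc₁) (by simpa using hα.symm)
  refine ⟨Units.mk0 α hα₀, Units.mk0 (α ^ (u + t + 1) / c₁) (by positivity), ?_, ?_⟩
  · simp only [Units.val_mk0]
    field_simp
  · have hα' : α ^ (u + 1) * (α ^ (u + t + 1)) ^ n = c₂ * c₁ ^ n := by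
      rwa [← pow_mul, ← pow_add, mul_comm]
    simp only [Units.val_mk0, div_pow]
    field_simp
    linear_combination (-(c₁ * α ^ (u + t + 1))) * hα'

theorem simple_derivation_normalization_xt_ys_general
    (k : Type*) [Field k] [IsAlgClosed k]
    (s t u : ℕ) (hs : 1 ≤ s)
    (c₁ c₂ : k) (hc₁ : c₁ ≠ 0) (hc₂ : c₂ ≠ 0) :
    IsSimpleDerivation
      (MvPolynomial.mkDerivation k
        ![1, X 0 ^ u * (C c₁ * X 0 ^ t + C c₂ * X 1 ^ s)]) ↔
    IsSimpleDerivation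
      (MvPolynomial.mkDerivation k
        ![1, X 0 ^ u * (X 0 ^ t + X 1 ^ s)]) := by
  obtain ⟨α, β, h₁, h₂⟩ := exists_units_mul_eq_pow_of_isAlgClosed hs t u hc₁ hc₂
  rw [← isSimpleDerivation_conj_iff (scaleVars ![α, β]), conj_scaleVars_mkDerivation h₁ h₂,
    isSimpleDerivation_smul_iff α.isUnit]

theorem simple_derivation_normalization_xt_ys
    (k : Type*) [Field k] [CharZero k] [IsAlgClosed k]
    (s t u : ℕ) (hs : 1 ≤ s) (ht : 1 ≤ t)
    (c₁ c₂ : k) (hc₁ : c₁ ≠ 0) (hc₂ : c₂ ≠ 0) :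
    IsSimpleDerivation
      (MvPolynomial.mkDerivation k
        ![1, X 0 ^ u * (C c₁ * X 0 ^ t + C c₂ * X 1 ^ s)]) ↔
    IsSimpleDerivation
      (MvPolynomial.mkDerivation k
        ![1, X 0 ^ u * (X 0 ^ t + X 1 ^ s)]) :=
  simple_derivation_normalization_xt_ys_general k s t u hs c₁ c₂ hc₁ hc₂
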